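/- Let f : ℝⁿ → ℝᵐ be continuous, A > 0, α ∈ (0,1), and φ : ℝⁿ → [0,∞) a continuous radially symmetric function supported in B₁(0) with ∫ φ = 1 and φ ≥ c > 0 on B_{1/2}(0). Suppose that for every x ∈ ℝⁿ and r > 0 there exists a constant vector f̄(x,r) ∈ ℝᵐ such that ∫_{B₁} |f(x + r y) − f̄(x,r)|² φ(y) dy ≤ A² r^{2α}. Then there is a constant B depending only on n, α, and φ such that |f(x) − f(y)| ≤ B A |x − y|^α for all x, y ∈ ℝⁿ. -/

import Mathlib

/-!
Since `φ ≥ c` on `B_{1/2}`, the hypothesis bounds the unweighted `L²` distance between `f` and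
`f̄(x, r)` on `B(x, r/2)` by `r^{n/2} A r^α / √c`. When two such balls contain a common ball of
comparable radius, averaging over it produces a point at which `f` is close to both constants,
so the constants themselves differ by `O(A r^α)`. Comparing consecutive dyadic scales at one
centre gives a geometric series; with the continuity of `f` it bounds `|f(x) - f̄(x, r)|` by
`O(A r^α)`. Comparing the constants of two points at the common scale `4|x - y|` finishes.
-/

open MeasureTheory Metric Real Module Filter Topology Pointwise

theorem exists_mem_measureReal_mul_le_setIntegral {X : Type*} [MeasurableSpace X]
    {μ : Measure X} {g : X → ℝ} {s : Set X} (hs₀ : μ s ≠ 0) (hs : μ s ≠ ⊤)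
    (hg : IntegrableOn g s μ) :
    ∃ w ∈ s, μ.real s * g w ≤ ∫ w in s, g w ∂μ := by
  obtain ⟨w, hw, hle⟩ := exists_le_setAverage hs₀ hs hg
  rw [setAverage_eq, smul_eq_mul] at hle
  exact ⟨w, hw, (le_inv_mul_iff₀ (ENNReal.toReal_pos hs₀ hs)).1 hle⟩

theorem Continuous.integrableOn_ball {X F : Type*} [MetricSpace X] [ProperSpace X]
    [MeasurableSpace X] [OpensMeasurableSpace X] (μ : Measure X) [IsFiniteMeasureOnCompacts μ]
    [NormedAddCommGroup F] {g : X → F} (hg : Continuous g) (x : X) (r : ℝ) :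
    IntegrableOn g (ball x r) μ :=
  (hg.continuousOn.integrableOn_compact (isCompact_closedBall x r)).mono_set ball_subset_closedBall

theorem measureReal_ball_pos {X : Type*} [MetricSpace X] [ProperSpace X] [MeasurableSpace X]
    (μ : Measure X) [IsFiniteMeasureOnCompacts μ] [μ.IsOpenPosMeasure] (x : X) {r : ℝ}
    (hr : 0 < r) : 0 < μ.real (ball x r) :=
  ENNReal.toReal_pos (measure_ball_pos μ x hr).ne' measure_ball_lt_top.ne

theorem tendsto_of_forall_exists_dist_le {ι X Y : Type*} [PseudoMetricSpace X]
    [PseudoMetricSpace Y] {l : Filter ι} {f : X → Y} {z : X} (hf : ContinuousAt f z) {u : ι → Y}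
    {δ ε : ι → ℝ} (hδ : Tendsto δ l (𝓝 0)) (hε : Tendsto ε l (𝓝 0))
    (h : ∀ i, ∃ w, dist w z ≤ δ i ∧ dist (f w) (u i) ≤ ε i) : Tendsto u l (𝓝 (f z)) := by
  choose w hwδ hwε using h
  have hw : Tendsto w l (𝓝 z) :=
    tendsto_iff_dist_tendsto_zero.2 (squeeze_zero (fun _ => dist_nonneg) hwδ hδ)
  exact (hf.tendsto.comp hw).congr_dist (squeeze_zero (fun _ => dist_nonneg) hwε hε)

section

variable {E F : Type*} [NormedAddCommGroup E] [NormedSpace ℝ E] [FiniteDimensional ℝ E]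
  [MeasurableSpace E] (μ : Measure E) [μ.IsAddHaarMeasure] [NormedAddCommGroup F]

noncomputable def campanatoConst (c k : ℝ) : ℝ :=
  √(2 * k ^ finrank ℝ E / (c * μ.real (ball (0 : E) 1)))

theorem campanatoConst_pos {c k : ℝ} (hc : 0 < c) (hk : 0 < k) : 0 < campanatoConst μ c k := by
  have hV := measureReal_ball_pos μ (0 : E) one_pos
  unfold campanatoConst
  positivity

-- `2K/(1 - 2^{-α})` sums the dyadic comparisons at one centre; `4^α` comes from the scale
-- `4|x - y|` at which two centres are compared.
noncomputable def campanatoHolderConst (c α : ℝ) : ℝ :=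
  2 * (2 * campanatoConst μ c 4 / (1 - (2 ^ α)⁻¹) + campanatoConst μ c 4) * 4 ^ α

theorem campanatoHolderConst_pos {c α : ℝ} (hc : 0 < c) (hα : 0 < α) :
    0 < campanatoHolderConst μ c α := by
  have hq : ((2 : ℝ) ^ α)⁻¹ < 1 := inv_lt_one_of_one_lt₀ (one_lt_rpow one_lt_two hα)
  have hK := campanatoConst_pos μ hc four_pos
  have : 0 < 1 - ((2 : ℝ) ^ α)⁻¹ := by linarith
  unfold campanatoHolderConst
  positivity

variable [BorelSpace E]

theorem setIntegral_ball_comp_add_smul (g : E → ℝ) (x : E) {r : ℝ} (hr : 0 < r) (s : ℝ) :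
    ∫ y in ball 0 s, g (x + r • y) ∂μ = (r ^ finrank ℝ E)⁻¹ * ∫ w in ball x (r * s), g w ∂μ := by
  have hball : r • ball (0 : E) s = (x + ·) ⁻¹' ball x (r * s) := by
    rw [_root_.smul_ball hr.ne', smul_zero, preimage_add_ball, sub_self, norm_eq_abs, abs_of_pos hr]
  rw [Measure.setIntegral_comp_smul_of_pos μ (fun u => g (x + u)) _ hr, hball,
    (measurePreserving_add_left μ x).setIntegral_preimage_emb (measurableEmbedding_addLeft x),
    smul_eq_mul]

theorem mul_setIntegral_ball_half_le {φ g : E → ℝ} {c : ℝ} (hc : 0 ≤ c) (hφ : ∀ y, 0 ≤ φ y)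
    (hφc : ∀ y ∈ ball (0 : E) (1 / 2), c ≤ φ y) (hg : ∀ w, 0 ≤ g w) (x : E) {r : ℝ} (hr : 0 < r)
    (hint : IntegrableOn (fun y => g (x + r • y) * φ y) (ball 0 1) μ) :
    c * ∫ w in ball x (r / 2), g w ∂μ ≤
      r ^ finrank ℝ E * ∫ y in ball 0 1, g (x + r • y) * φ y ∂μ := by
  have hscale : ∫ w in ball x (r / 2), g w ∂μ =
      r ^ finrank ℝ E * ∫ y in ball 0 (1 / 2), g (x + r • y) ∂μ := by
    rw [setIntegral_ball_comp_add_smul μ g x hr, mul_inv_cancel_left₀ (by positivity), mul_one_div]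
  have hweight : c * ∫ y in ball 0 (1 / 2), g (x + r • y) ∂μ ≤
      ∫ y in ball 0 1, g (x + r • y) * φ y ∂μ := calc
    c * ∫ y in ball 0 (1 / 2), g (x + r • y) ∂μ = ∫ y in ball 0 (1 / 2), c * g (x + r • y) ∂μ :=
      (integral_const_mul c _).symm
    _ ≤ ∫ y in ball 0 (1 / 2), g (x + r • y) * φ y ∂μ := by
      refine integral_mono_of_nonneg (.of_forall fun y => mul_nonneg hc (hg _))
        (hint.mono_set (ball_subset_ball (by norm_num))) ?_
      filter_upwards [ae_restrict_mem measurableSet_ball] with y hy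
      rw [mul_comm]
      exact mul_le_mul_of_nonneg_left (hφc y hy) (hg _)
    _ ≤ ∫ y in ball 0 1, g (x + r • y) * φ y ∂μ :=
      setIntegral_mono_set hint (.of_forall fun y => mul_nonneg (hg _) (hφ y))
        (ball_subset_ball (by norm_num)).eventuallyLE
  rw [hscale, mul_left_comm]
  exact mul_le_mul_of_nonneg_left hweight (by positivity)

/-- `a x r` plays the role of `f̄(x, r)`; this is the form the weighted hypothesis takes on
`B(x, r/2)`, where `φ ≥ c`. -/
def HasCampanatoDecay (f : E → F) (a : E → ℝ → F) (c A α : ℝ) : Prop :=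
  ∀ x r, 0 < r →
    c * ∫ w in ball x (r / 2), ‖f w - a x r‖ ^ 2 ∂μ ≤ r ^ finrank ℝ E * (A * r ^ α) ^ 2

variable {μ} {f : E → F} {a : E → ℝ → F} {c A α : ℝ}

theorem HasCampanatoDecay.mul_setIntegral_le (ha : HasCampanatoDecay μ f a c A α) (hc : 0 ≤ c)
    (hf : Continuous f) {x z : E} {r t : ℝ} (hr : 0 < r) (hsub : ball z t ⊆ ball x (r / 2)) :
    c * ∫ w in ball z t, ‖f w - a x r‖ ^ 2 ∂μ ≤ r ^ finrank ℝ E * (A * r ^ α) ^ 2 := by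
  refine (mul_le_mul_of_nonneg_left ?_ hc).trans (ha x r hr)
  exact setIntegral_mono_set (((hf.sub continuous_const).norm.pow 2).integrableOn_ball μ _ _)
    (.of_forall fun _ => sq_nonneg _) hsub.eventuallyLE

theorem HasCampanatoDecay.exists_mem_ball_sq_add_sq_le (ha : HasCampanatoDecay μ f a c A α)
    (hc : 0 ≤ c) (hf : Continuous f) (hA : 0 ≤ A) (hα : 0 ≤ α) {x₁ x₂ z : E} {r₁ r₂ t : ℝ}
    (ht : 0 < t) (hr₂ : 0 < r₂) (hr : r₂ ≤ r₁)
    (h₁ : ball z t ⊆ ball x₁ (r₁ / 2)) (h₂ : ball z t ⊆ ball x₂ (r₂ / 2)) :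
    ∃ w ∈ ball z t, c * (t ^ finrank ℝ E * μ.real (ball (0 : E) 1)) *
      (‖f w - a x₁ r₁‖ ^ 2 + ‖f w - a x₂ r₂‖ ^ 2) ≤ 2 * (r₁ ^ finrank ℝ E * (A * r₁ ^ α) ^ 2) := by
  have hr₁ : 0 < r₁ := hr₂.trans_le hr
  have hI₁ := ha.mul_setIntegral_le hc hf hr₁ h₁
  have hI₂ := (ha.mul_setIntegral_le hc hf hr₂ h₂).trans
    (by gcongr : r₂ ^ finrank ℝ E * (A * r₂ ^ α) ^ 2 ≤ r₁ ^ finrank ℝ E * (A * r₁ ^ α) ^ 2)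
  have hint : ∀ b : F, IntegrableOn (fun w => ‖f w - b‖ ^ 2) (ball z t) μ := fun b =>
    ((hf.sub continuous_const).norm.pow 2).integrableOn_ball μ _ _
  obtain ⟨w, hw, hle⟩ := exists_mem_measureReal_mul_le_setIntegral
    (g := fun w => ‖f w - a x₁ r₁‖ ^ 2 + ‖f w - a x₂ r₂‖ ^ 2) (measure_ball_pos μ z ht).ne'
    measure_ball_lt_top.ne ((hint (a x₁ r₁)).add (hint (a x₂ r₂)))
  have hvol : μ.real (ball z t) = t ^ finrank ℝ E * μ.real (ball (0 : E) 1) := by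
    simp [measureReal_def, Measure.addHaar_ball_of_pos μ z ht, ENNReal.toReal_mul, ht.le]
  rw [integral_add (hint _) (hint _), hvol] at hle
  refine ⟨w, hw, ?_⟩
  rw [mul_assoc]
  linarith [mul_le_mul_of_nonneg_left hle hc]

theorem HasCampanatoDecay.exists_mem_ball_norm_sub_le (ha : HasCampanatoDecay μ f a c A α)
    (hc : 0 < c) (hf : Continuous f) (hA : 0 ≤ A) (hα : 0 ≤ α) {x₁ x₂ z : E} {r₁ r₂ t k : ℝ}
    (ht : 0 < t) (hr₂ : 0 < r₂) (hr : r₂ ≤ r₁) (hk : r₁ ≤ k * t)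
    (h₁ : ball z t ⊆ ball x₁ (r₁ / 2)) (h₂ : ball z t ⊆ ball x₂ (r₂ / 2)) :
    ∃ w ∈ ball z t, ‖f w - a x₁ r₁‖ ≤ campanatoConst μ c k * (A * r₁ ^ α) ∧
      ‖f w - a x₂ r₂‖ ≤ campanatoConst μ c k * (A * r₁ ^ α) := by
  obtain ⟨w, hw, hle⟩ := ha.exists_mem_ball_sq_add_sq_le hc.le hf hA hα ht hr₂ hr h₁ h₂
  set d := finrank ℝ E
  set V := μ.real (ball (0 : E) 1)
  set M := A * r₁ ^ α
  have hr₁ : 0 < r₁ := hr₂.trans_le hr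
  have hk₀ : 0 < k := pos_of_mul_pos_left (hr₁.trans_le hk) ht.le
  have hV : 0 < V := measureReal_ball_pos μ 0 one_pos
  have hkt : r₁ ^ d ≤ k ^ d * t ^ d := by rw [← mul_pow]; gcongr
  have hsq : ‖f w - a x₁ r₁‖ ^ 2 + ‖f w - a x₂ r₂‖ ^ 2 ≤ (campanatoConst μ c k * M) ^ 2 := by
    rw [mul_pow, campanatoConst, sq_sqrt (by positivity), div_mul_eq_mul_div,
      le_div_iff₀ (by positivity)]
    refine le_of_mul_le_mul_left ?_ (by positivity : 0 < t ^ d)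
    nlinarith [sq_nonneg M]
  have hKM : 0 ≤ campanatoConst μ c k * M :=
    mul_nonneg (campanatoConst_pos μ hc hk₀).le (by positivity)
  refine ⟨w, hw, ?_, ?_⟩ <;>
    refine (pow_le_pow_iff_left₀ (norm_nonneg _) hKM two_ne_zero).1 ?_ <;>
    nlinarith [sq_nonneg ‖f w - a x₁ r₁‖, sq_nonneg ‖f w - a x₂ r₂‖]

theorem HasCampanatoDecay.norm_sub_le (ha : HasCampanatoDecay μ f a c A α) (hc : 0 < c)
    (hf : Continuous f) (hA : 0 ≤ A) (hα : 0 ≤ α) {x₁ x₂ z : E} {r₁ r₂ t k : ℝ} (ht : 0 < t)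
    (hr₂ : 0 < r₂) (hr : r₂ ≤ r₁) (hk : r₁ ≤ k * t)
    (h₁ : ball z t ⊆ ball x₁ (r₁ / 2)) (h₂ : ball z t ⊆ ball x₂ (r₂ / 2)) :
    ‖a x₁ r₁ - a x₂ r₂‖ ≤ 2 * campanatoConst μ c k * (A * r₁ ^ α) := by
  obtain ⟨w, -, hw₁, hw₂⟩ := ha.exists_mem_ball_norm_sub_le hc hf hA hα ht hr₂ hr hk h₁ h₂
  calc ‖a x₁ r₁ - a x₂ r₂‖ ≤ ‖a x₁ r₁ - f w‖ + ‖f w - a x₂ r₂‖ :=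
        norm_sub_le_norm_sub_add_norm_sub _ _ _
    _ ≤ 2 * campanatoConst μ c k * (A * r₁ ^ α) := by rw [norm_sub_rev]; linarith

theorem HasCampanatoDecay.tendsto_dyadic (ha : HasCampanatoDecay μ f a c A α) (hc : 0 < c)
    (hf : Continuous f) (hA : 0 ≤ A) (hα : 0 < α) (z : E) {r : ℝ} (hr : 0 < r) :
    Tendsto (fun N : ℕ => a z (r / 2 ^ N)) atTop (𝓝 (f z)) := by
  have hρ : Tendsto (fun N : ℕ => r / 2 ^ N) atTop (𝓝 0) :=
    tendsto_const_nhds.div_atTop (tendsto_pow_atTop_atTop_of_one_lt one_lt_two)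
  have hρα : Tendsto (fun N : ℕ => campanatoConst μ c 2 * (A * (r / 2 ^ N) ^ α)) atTop (𝓝 0) := by
    have := ((continuousAt_rpow_const 0 α (.inr hα.le)).tendsto.comp hρ).const_mul A
    simpa [zero_rpow hα.ne'] using this.const_mul (campanatoConst μ c 2)
  refine tendsto_of_forall_exists_dist_le hf.continuousAt hρ hρα fun N => ?_
  have hρN : 0 < r / 2 ^ N := by positivity
  obtain ⟨w, hw, hfw, -⟩ := ha.exists_mem_ball_norm_sub_le (t := r / 2 ^ N / 2) (k := 2) hc hf hA
    hα.le (by positivity) hρN le_rfl (by linarith) subset_rfl subset_rfl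
  exact ⟨w, (mem_ball.1 hw).le.trans (by linarith), by rwa [dist_eq_norm]⟩

theorem HasCampanatoDecay.norm_sub_self_le (ha : HasCampanatoDecay μ f a c A α) (hc : 0 < c)
    (hf : Continuous f) (hA : 0 ≤ A) (hα : 0 < α) (z : E) {r : ℝ} (hr : 0 < r) :
    ‖f z - a z r‖ ≤ 2 * campanatoConst μ c 4 / (1 - (2 ^ α)⁻¹) * (A * r ^ α) := by
  have hq : ((2 : ℝ) ^ α)⁻¹ < 1 := inv_lt_one_of_one_lt₀ (one_lt_rpow one_lt_two hα)
  have hpow : ∀ N : ℕ, (r / 2 ^ N) ^ α = r ^ α * ((2 : ℝ) ^ α)⁻¹ ^ N := fun N => by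
    rw [div_rpow hr.le (by positivity), ← rpow_pow_comm zero_le_two, inv_pow, div_eq_mul_inv]
  have hstep : ∀ N : ℕ, dist (a z (r / 2 ^ N)) (a z (r / 2 ^ (N + 1))) ≤
      2 * campanatoConst μ c 4 * (A * r ^ α) * ((2 : ℝ) ^ α)⁻¹ ^ N := fun N => by
    have hρN : 0 < r / 2 ^ N := by positivity
    rw [dist_eq_norm, pow_succ, ← div_div]
    refine (ha.norm_sub_le hc hf hA hα.le (t := r / 2 ^ N / 4) (k := 4) (by positivity)
      (half_pos hρN) (by linarith) (by linarith) (ball_subset_ball (by linarith))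
      (ball_subset_ball (by linarith))).trans_eq ?_
    rw [hpow]
    ring
  have := dist_le_of_le_geometric_of_tendsto₀ _ _ hq hstep (ha.tendsto_dyadic hc hf hA hα z hr)
  rw [pow_zero, div_one, dist_eq_norm, norm_sub_rev] at this
  exact this.trans_eq (by ring)

theorem HasCampanatoDecay.norm_sub_le_mul_rpow (ha : HasCampanatoDecay μ f a c A α) (hc : 0 < c)
    (hf : Continuous f) (hA : 0 ≤ A) (hα : 0 < α) (x y : E) :
    ‖f x - f y‖ ≤ campanatoHolderConst μ c α * A * ‖x - y‖ ^ α := by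
  rcases eq_or_ne x y with rfl | hxy
  · simp [zero_rpow hα.ne']
  set d := ‖x - y‖
  have hd : 0 < d := norm_pos_iff.2 (sub_ne_zero.2 hxy)
  set K := campanatoConst μ c 4
  set L := 2 * K / (1 - (2 ^ α)⁻¹)
  have hx := ha.norm_sub_self_le hc hf hA hα x (by positivity : 0 < 4 * d)
  have hy := ha.norm_sub_self_le hc hf hA hα y (by positivity : 0 < 4 * d)
  have hmeans : ‖a x (4 * d) - a y (4 * d)‖ ≤ 2 * K * (A * (4 * d) ^ α) := by
    refine ha.norm_sub_le hc hf hA hα.le (t := d) (by positivity) (by positivity) le_rfl le_rfl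
      (ball_subset_ball (by linarith)) fun w hw => ?_
    rw [mem_ball] at hw ⊢
    linarith [dist_triangle w x y, dist_eq_norm x y]
  calc ‖f x - f y‖ ≤ ‖f x - a x (4 * d)‖ + ‖a x (4 * d) - a y (4 * d)‖ + ‖a y (4 * d) - f y‖ :=
        by simpa only [dist_eq_norm] using dist_triangle4 (f x) (a x (4 * d)) (a y (4 * d)) (f y)
    _ ≤ 2 * (L + K) * (A * (4 * d) ^ α) := by rw [norm_sub_rev (a y _)]; linarith
    _ = campanatoHolderConst μ c α * A * d ^ α := by
      rw [mul_rpow zero_le_four hd.le, campanatoHolderConst]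
      ring

end

theorem stmt_2_general (n m : ℕ) (α : ℝ) (hα : α ∈ Set.Ioo (0 : ℝ) 1)
    (φ : EuclideanSpace ℝ (Fin n) → ℝ) (c : ℝ) (hc : 0 < c)
    (hφcont : Continuous φ) (hφ : ∀ y, 0 ≤ φ y)
    (hφlow : ∀ y ∈ ball (0 : EuclideanSpace ℝ (Fin n)) (1 / 2), c ≤ φ y) :
    ∃ B : ℝ, 0 < B ∧
      ∀ (f : EuclideanSpace ℝ (Fin n) → EuclideanSpace ℝ (Fin m)) (A : ℝ),
        Continuous f → 0 < A →
        (∀ (x : EuclideanSpace ℝ (Fin n)) (r : ℝ), 0 < r →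
          ∃ fbar : EuclideanSpace ℝ (Fin m),
            ∫ y in ball (0 : EuclideanSpace ℝ (Fin n)) 1,
                ‖f (x + r • y) - fbar‖ ^ 2 * φ y ≤ A ^ 2 * r ^ (2 * α)) →
        ∀ x y : EuclideanSpace ℝ (Fin n), ‖f x - f y‖ ≤ B * A * ‖x - y‖ ^ α := by
  refine ⟨campanatoHolderConst (volume : Measure (EuclideanSpace ℝ (Fin n))) c α,
    campanatoHolderConst_pos _ hc hα.1, ?_⟩
  intro f A hf hA hcamp
  choose! a ha using hcamp
  have hbound : HasCampanatoDecay volume f a c A α := fun x r hr => by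
    have hint : IntegrableOn (fun y => ‖f (x + r • y) - a x r‖ ^ 2 * φ y) (ball 0 1) := by
      refine Continuous.integrableOn_ball _ ?_ _ _
      fun_prop
    refine (mul_setIntegral_ball_half_le volume hc.le hφ hφlow (fun w => sq_nonneg ‖f w - a x r‖)
      x hr hint).trans ?_
    rw [mul_pow, ← rpow_mul_natCast hr.le, Nat.cast_ofNat, mul_comm α]
    exact mul_le_mul_of_nonneg_left (ha x r hr) (by positivity)
  exact hbound.norm_sub_le_mul_rpow hc hf hA.le hα.1

/-- Campanato's characterization of Hölder spaces: uniform `r^{2α}` decay of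
local weighted L² oscillations implies `C^α` regularity. -/
theorem stmt_2 (n m : ℕ) (α : ℝ) (hα : α ∈ Set.Ioo (0 : ℝ) 1)
    (φ : EuclideanSpace ℝ (Fin n) → ℝ) (c : ℝ) (hc : 0 < c)
    (hφcont : Continuous φ) (hφ : ∀ y, 0 ≤ φ y)
    (hφrad : ∀ y z : EuclideanSpace ℝ (Fin n), ‖y‖ = ‖z‖ → φ y = φ z)
    (hφsupp : tsupport φ ⊆ ball 0 1)
    (hφ1 : ∫ y in ball (0 : EuclideanSpace ℝ (Fin n)) 1, φ y = 1)
    (hφlow : ∀ y ∈ ball (0 : EuclideanSpace ℝ (Fin n)) (1 / 2), c ≤ φ y) :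
    ∃ B : ℝ, 0 < B ∧
      ∀ (f : EuclideanSpace ℝ (Fin n) → EuclideanSpace ℝ (Fin m)) (A : ℝ),
        Continuous f → 0 < A →
        (∀ (x : EuclideanSpace ℝ (Fin n)) (r : ℝ), 0 < r →
          ∃ fbar : EuclideanSpace ℝ (Fin m),
            ∫ y in ball (0 : EuclideanSpace ℝ (Fin n)) 1,
                ‖f (x + r • y) - fbar‖ ^ 2 * φ y ≤ A ^ 2 * r ^ (2 * α)) →
        ∀ x y : EuclideanSpace ℝ (Fin n), ‖f x - f y‖ ≤ B * A * ‖x - y‖ ^ α :=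
  stmt_2_general n m α hα φ c hc hφcont hφ hφlow
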